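/- arXiv:1802.09888 — 3 statements merged into one kernel-verified Lean document; each statement's English description precedes it below -/
import Mathlib

section
/- Let T : C → C be a contraction with constant θ ∈ (0,1) on a nonempty closed convex subset C of a Banach space with fixed point p, and let (xₙ) be the K iteration with αₙ, βₙ ∈ [0,1] satisfying ∑ αₙβₙ = ∞. Then xₙ converges strongly to p. -/
/-! Closed balls around `p` are convex and `T` maps `C ∩ closedBall p r` into
`closedBall p (θ * r)`, so the convex combinations in the K iteration never increase the
distance to `p` while each of the three nested layers of `T` multiplies it by `θ`. Hence
`‖xₙ₊₁ - p‖ ≤ θ³ ‖xₙ - p‖` and `xₙ → p` geometrically. -/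

open Filter Metric Topology

theorem tendsto_of_dist_succ_le_mul {M : Type*} [PseudoMetricSpace M] {u : ℕ → M} {p : M}
    {q : ℝ} (hq₀ : 0 ≤ q) (hq₁ : q < 1) (h : ∀ n, dist (u (n + 1)) p ≤ q * dist (u n) p) :
    Tendsto u atTop (𝓝 p) := by
  rw [tendsto_iff_dist_tendsto_zero]
  have hgeom : Tendsto (fun n => q ^ n * dist (u 0) p) atTop (𝓝 0) := by
    simpa using (tendsto_pow_atTop_nhds_zero_of_lt_one hq₀ hq₁).mul_const (dist (u 0) p)
  exact squeeze_zero (fun _ => dist_nonneg) (fun n => le_geom (u := fun n => dist (u n) p) hq₀ n fun k _ => h k) hgeom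

section KIteration

variable {X : Type*} [NormedAddCommGroup X] {C : Set X} {T : X → X} {θ : ℝ} {p : X}

theorem apply_mem_closedBall_of_contraction (hθ : 0 ≤ θ)
    (hT : ∀ x ∈ C, ∀ y ∈ C, ‖T x - T y‖ ≤ θ * ‖x - y‖) (hpC : p ∈ C) (hp : T p = p)
    {x : X} {r : ℝ} (hx : x ∈ C) (hxr : x ∈ closedBall p r) :
    T x ∈ closedBall p (θ * r) := by
  rw [mem_closedBall_iff_norm] at hxr ⊢
  calc ‖T x - p‖ = ‖T x - T p‖ := by rw [hp]
    _ ≤ θ * ‖x - p‖ := hT x hx p hpC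
    _ ≤ θ * r := mul_le_mul_of_nonneg_left hxr hθ

variable [NormedSpace ℝ X]

def kStep (T : X → X) (a b : ℝ) (x : X) : X :=
  T (T ((1 - a) • T x + a • T ((1 - b) • x + b • T x)))

theorem Convex.sub_smul_add_smul_mem (hC : Convex ℝ C) {x y : X} (hx : x ∈ C)
    (hy : y ∈ C) {t : ℝ} (ht : t ∈ Set.Icc (0 : ℝ) 1) : (1 - t) • x + t • y ∈ C :=
  hC hx hy (sub_nonneg.2 ht.2) ht.1 (sub_add_cancel 1 t)

theorem kStep_mem (hC : Convex ℝ C) (hTC : ∀ x ∈ C, T x ∈ C) {a b : ℝ}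
    (ha : a ∈ Set.Icc (0 : ℝ) 1) (hb : b ∈ Set.Icc (0 : ℝ) 1) {x : X} (hx : x ∈ C) :
    kStep T a b x ∈ C := by
  have hz := hC.sub_smul_add_smul_mem hx (hTC x hx) hb
  exact hTC _ (hTC _ (hC.sub_smul_add_smul_mem (hTC x hx) (hTC _ hz) ha))

theorem norm_kStep_sub_le (hC : Convex ℝ C) (hTC : ∀ x ∈ C, T x ∈ C) (hθ : θ ∈ Set.Icc (0 : ℝ) 1)
    (hT : ∀ x ∈ C, ∀ y ∈ C, ‖T x - T y‖ ≤ θ * ‖x - y‖) (hpC : p ∈ C) (hp : T p = p)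
    {a b : ℝ} (ha : a ∈ Set.Icc (0 : ℝ) 1) (hb : b ∈ Set.Icc (0 : ℝ) 1) {x : X} (hx : x ∈ C) :
    ‖kStep T a b x - p‖ ≤ θ ^ 3 * ‖x - p‖ := by
  have hTmem : ∀ {y : X} {s : ℝ}, y ∈ C → y ∈ closedBall p s → T y ∈ closedBall p (θ * s) :=
    apply_mem_closedBall_of_contraction hθ.1 hT hpC hp
  set r := ‖x - p‖
  have hxr : x ∈ closedBall p r := mem_closedBall_iff_norm.2 le_rfl
  have hTxθr := hTmem hx hxr
  have hTxr : T x ∈ closedBall p r :=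
    closedBall_subset_closedBall (mul_le_of_le_one_left (norm_nonneg _) hθ.2) hTxθr
  have hzC := hC.sub_smul_add_smul_mem hx (hTC x hx) hb
  have hzr := (convex_closedBall p r).sub_smul_add_smul_mem hxr hTxr hb
  have hwC := hC.sub_smul_add_smul_mem (hTC x hx) (hTC _ hzC) ha
  have hwθr := (convex_closedBall p (θ * r)).sub_smul_add_smul_mem hTxθr (hTmem hzC hzr) ha
  have hstep := hTmem (hTC _ hwC) (hTmem hwC hwθr)
  rw [mem_closedBall_iff_norm] at hstep
  simpa only [kStep, pow_succ, pow_zero, one_mul, mul_assoc] using hstep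

end KIteration

theorem stmt_3_general {X : Type*} [NormedAddCommGroup X] [NormedSpace ℝ X]
    (C : Set X) (hCcv : Convex ℝ C)
    (T : X → X) (hTC : ∀ x ∈ C, T x ∈ C) (θ : ℝ) (hθ : θ ∈ Set.Ioo (0:ℝ) 1)
    (hT : ∀ x ∈ C, ∀ y ∈ C, ‖T x - T y‖ ≤ θ * ‖x - y‖)
    (p : X) (hpC : p ∈ C) (hp : T p = p)
    (α β : ℕ → ℝ) (hα : ∀ n, α n ∈ Set.Icc (0:ℝ) 1) (hβ : ∀ n, β n ∈ Set.Icc (0:ℝ) 1)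
    (x z y : ℕ → X) (hx0 : x 0 ∈ C)
    (hz : ∀ n, z n = (1 - β n) • x n + β n • T (x n))
    (hy : ∀ n, y n = T ((1 - α n) • T (x n) + α n • T (z n)))
    (hx : ∀ n, x (n + 1) = T (y n)) :
    Tendsto x atTop (nhds p) := by
  have hstep : ∀ n, x (n + 1) = kStep T (α n) (β n) (x n) := fun n => by
    rw [hx, hy, hz, kStep]
  have hmem : ∀ n, x n ∈ C := by
    intro n
    induction n with
    | zero => exact hx0
    | succ n ih => exact hstep n ▸ kStep_mem hCcv hTC (hα n) (hβ n) ih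
  refine tendsto_of_dist_succ_le_mul (pow_nonneg hθ.1.le 3)
    (pow_lt_one₀ hθ.1.le hθ.2 three_ne_zero) fun n => ?_
  simpa only [dist_eq_norm, hstep] using
    norm_kStep_sub_le hCcv hTC (Set.Ioo_subset_Icc_self hθ) hT hpC hp (hα n) (hβ n) (hmem n)

theorem stmt_3 {X : Type*} [NormedAddCommGroup X] [NormedSpace ℝ X] [CompleteSpace X]
    (C : Set X) (hCne : C.Nonempty) (hCcl : IsClosed C) (hCcv : Convex ℝ C)
    (T : X → X) (hTC : ∀ x ∈ C, T x ∈ C) (θ : ℝ) (hθ : θ ∈ Set.Ioo (0:ℝ) 1)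
    (hT : ∀ x ∈ C, ∀ y ∈ C, ‖T x - T y‖ ≤ θ * ‖x - y‖)
    (p : X) (hpC : p ∈ C) (hp : T p = p)
    (α β : ℕ → ℝ) (hα : ∀ n, α n ∈ Set.Icc (0:ℝ) 1) (hβ : ∀ n, β n ∈ Set.Icc (0:ℝ) 1)
    (hdiv : Tendsto (fun N => ∑ k ∈ Finset.range N, α k * β k) atTop atTop)
    (x z y : ℕ → X) (hx0 : x 0 ∈ C)
    (hz : ∀ n, z n = (1 - β n) • x n + β n • T (x n))
    (hy : ∀ n, y n = T ((1 - α n) • T (x n) + α n • T (z n)))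
    (hx : ∀ n, x (n + 1) = T (y n)) :
    Tendsto x atTop (nhds p) :=
  stmt_3_general C hCcv T hTC θ hθ hT p hpC hp α β hα hβ x z y hx0 hz hy hx
end

section
/- For a contraction T with constant θ ∈ (0,1) and fixed point p, the K iteration satisfies ‖xₙ₊₁ - p‖ ≤ ‖x₀ - p‖ · θ^{3(n+1)} · exp(-(1-θ)∑_{k=0}^n αₖβₖ). -/
/-! Each K step applies `T` three times to a convex combination that is closer to `p` than
`x` by the factor `1 - (1 - θ) αₙ βₙ`, so the distance to `p` shrinks by at least
`θ³ (1 - (1 - θ) αₙ βₙ) ≤ θ³ exp (-(1 - θ) αₙ βₙ)` per step. -/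

open Finset

lemma norm_smul_add_smul_sub_le {E : Type*} [NormedAddCommGroup E] [NormedSpace ℝ E]
    (a b p : E) {t : ℝ} (h0 : 0 ≤ t) (h1 : t ≤ 1) :
    ‖(1 - t) • a + t • b - p‖ ≤ (1 - t) * ‖a - p‖ + t * ‖b - p‖ := by
  calc ‖(1 - t) • a + t • b - p‖ = ‖(1 - t) • (a - p) + t • (b - p)‖ := by
        congr 1; module
    _ ≤ ‖(1 - t) • (a - p)‖ + ‖t • (b - p)‖ := norm_add_le _ _
    _ = (1 - t) * ‖a - p‖ + t * ‖b - p‖ := by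
        rw [norm_smul, norm_smul, Real.norm_of_nonneg h0, Real.norm_of_nonneg (by linarith)]

lemma le_pow_mul_exp_neg_sum_of_le_mul {u r : ℕ → ℝ} {q : ℝ} (hq : 0 ≤ q) (hu0 : 0 ≤ u 0)
    (hr : ∀ n, r n ≤ 1) (hu : ∀ n, u (n + 1) ≤ q * (1 - r n) * u n) (n : ℕ) :
    u n ≤ u 0 * q ^ n * Real.exp (-∑ k ∈ range n, r k) := by
  induction n with
  | zero => simp
  | succ n ih =>
    have hfactor : 0 ≤ q * (1 - r n) := mul_nonneg hq (by linarith [hr n])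
    calc u (n + 1) ≤ q * (1 - r n) * u n := hu n
      _ ≤ q * (1 - r n) * (u 0 * q ^ n * Real.exp (-∑ k ∈ range n, r k)) :=
          mul_le_mul_of_nonneg_left ih hfactor
      _ ≤ q * Real.exp (-r n) * (u 0 * q ^ n * Real.exp (-∑ k ∈ range n, r k)) := by
          gcongr
          linarith [Real.add_one_le_exp (-r n)]
      _ = u 0 * q ^ (n + 1) * Real.exp (-∑ k ∈ range (n + 1), r k) := by
          rw [sum_range_succ, neg_add, Real.exp_add]
          ring

/-- One step `xₙ ↦ xₙ₊₁` of the K iteration with parameters `a = αₙ`, `b = βₙ`. -/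
def kIterStep {X : Type*} [AddCommGroup X] [Module ℝ X] (T : X → X) (a b : ℝ) (x : X) : X :=
  T (T ((1 - a) • T x + a • T ((1 - b) • x + b • T x)))

section Contraction

variable {X : Type*} [NormedAddCommGroup X] {C : Set X} {T : X → X} {θ : ℝ} {p : X}

lemma norm_apply_sub_fixedPoint_le (hT : ∀ x ∈ C, ∀ y ∈ C, ‖T x - T y‖ ≤ θ * ‖x - y‖)
    (hpC : p ∈ C) (hp : T p = p) {x : X} (hx : x ∈ C) : ‖T x - p‖ ≤ θ * ‖x - p‖ := by
  simpa only [hp] using hT x hx p hpC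

variable [NormedSpace ℝ X]

lemma kIterStep_mem (hCcv : Convex ℝ C) (hTC : Set.MapsTo T C C) {a b : ℝ}
    (ha : a ∈ Set.Icc 0 1) (hb : b ∈ Set.Icc 0 1) {x : X} (hx : x ∈ C) :
    kIterStep T a b x ∈ C := by
  have hz : (1 - b) • x + b • T x ∈ C :=
    hCcv hx (hTC hx) (by linarith [hb.2]) hb.1 (by ring)
  have hw : (1 - a) • T x + a • T ((1 - b) • x + b • T x) ∈ C :=
    hCcv (hTC hx) (hTC hz) (by linarith [ha.2]) ha.1 (by ring)
  exact hTC (hTC hw)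

lemma norm_kIterStep_sub_le (hCcv : Convex ℝ C) (hTC : Set.MapsTo T C C)
    (hT : ∀ x ∈ C, ∀ y ∈ C, ‖T x - T y‖ ≤ θ * ‖x - y‖) (hpC : p ∈ C) (hp : T p = p) (hθ : 0 ≤ θ)
    {a b : ℝ} (ha : a ∈ Set.Icc 0 1) (hb : b ∈ Set.Icc 0 1) {x : X} (hx : x ∈ C) :
    ‖kIterStep T a b x - p‖ ≤ θ ^ 3 * (1 - (1 - θ) * (a * b)) * ‖x - p‖ := by
  set z := (1 - b) • x + b • T x
  set w := (1 - a) • T x + a • T z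
  have hzC : z ∈ C := hCcv hx (hTC hx) (by linarith [hb.2]) hb.1 (by ring)
  have hwC : w ∈ C := hCcv (hTC hx) (hTC hzC) (by linarith [ha.2]) ha.1 (by ring)
  have hTx := norm_apply_sub_fixedPoint_le hT hpC hp hx
  have hz : ‖z - p‖ ≤ (1 - b * (1 - θ)) * ‖x - p‖ := by
    have := norm_smul_add_smul_sub_le x (T x) p hb.1 hb.2
    nlinarith [hb.1]
  have hw : ‖w - p‖ ≤ θ * (1 - (1 - θ) * (a * b)) * ‖x - p‖ := by
    have := norm_smul_add_smul_sub_le (T x) (T z) p ha.1 ha.2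
    have hTz := norm_apply_sub_fixedPoint_le hT hpC hp hzC
    have hTz' : ‖T z - p‖ ≤ θ * ((1 - b * (1 - θ)) * ‖x - p‖) :=
      hTz.trans (mul_le_mul_of_nonneg_left hz hθ)
    nlinarith [ha.1, ha.2]
  calc ‖T (T w) - p‖ ≤ θ * ‖T w - p‖ := norm_apply_sub_fixedPoint_le hT hpC hp (hTC hwC)
    _ ≤ θ * (θ * ‖w - p‖) :=
        mul_le_mul_of_nonneg_left (norm_apply_sub_fixedPoint_le hT hpC hp hwC) hθ
    _ ≤ θ * (θ * (θ * (1 - (1 - θ) * (a * b)) * ‖x - p‖)) := by gcongr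
    _ = θ ^ 3 * (1 - (1 - θ) * (a * b)) * ‖x - p‖ := by ring

end Contraction

theorem stmt_4_general {X : Type*} [NormedAddCommGroup X] [NormedSpace ℝ X]
    (C : Set X) (hCcv : Convex ℝ C)
    (T : X → X) (hTC : ∀ x ∈ C, T x ∈ C) (θ : ℝ) (hθ : θ ∈ Set.Ioo (0:ℝ) 1)
    (hT : ∀ x ∈ C, ∀ y ∈ C, ‖T x - T y‖ ≤ θ * ‖x - y‖)
    (p : X) (hpC : p ∈ C) (hp : T p = p)
    (α β : ℕ → ℝ) (hα : ∀ n, α n ∈ Set.Icc (0:ℝ) 1) (hβ : ∀ n, β n ∈ Set.Icc (0:ℝ) 1)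
    (x z y : ℕ → X) (hx0 : x 0 ∈ C)
    (hz : ∀ n, z n = (1 - β n) • x n + β n • T (x n))
    (hy : ∀ n, y n = T ((1 - α n) • T (x n) + α n • T (z n)))
    (hx : ∀ n, x (n + 1) = T (y n)) :
    ∀ n, ‖x (n + 1) - p‖ ≤ ‖x 0 - p‖ * θ ^ (3 * (n + 1)) *
      Real.exp (-(1 - θ) * ∑ k ∈ Finset.range (n + 1), α k * β k) := by
  have hstep : ∀ n, x (n + 1) = kIterStep T (α n) (β n) (x n) := fun n => by
    rw [hx, hy, hz, kIterStep]
  have hxC : ∀ n, x n ∈ C := fun n => by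
    induction n with
    | zero => exact hx0
    | succ n ih => rw [hstep]; exact kIterStep_mem hCcv hTC (hα n) (hβ n) ih
  have hr : ∀ n, (1 - θ) * (α n * β n) ≤ 1 := fun n => by
    have hab : α n * β n ≤ 1 := mul_le_one₀ (hα n).2 (hβ n).1 (hβ n).2
    nlinarith [hθ.1, hθ.2, mul_nonneg (hα n).1 (hβ n).1]
  intro n
  have := le_pow_mul_exp_neg_sum_of_le_mul (u := fun n => ‖x n - p‖) (pow_nonneg hθ.1.le 3)
    (norm_nonneg _) hr (fun n => by
      simpa only [hstep] using
        norm_kIterStep_sub_le hCcv hTC hT hpC hp hθ.1.le (hα n) (hβ n) (hxC n)) (n + 1)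
  rwa [← pow_mul, ← mul_sum, ← neg_mul] at this

theorem stmt_4 {X : Type*} [NormedAddCommGroup X] [NormedSpace ℝ X] [CompleteSpace X]
    (C : Set X) (hCne : C.Nonempty) (hCcl : IsClosed C) (hCcv : Convex ℝ C)
    (T : X → X) (hTC : ∀ x ∈ C, T x ∈ C) (θ : ℝ) (hθ : θ ∈ Set.Ioo (0:ℝ) 1)
    (hT : ∀ x ∈ C, ∀ y ∈ C, ‖T x - T y‖ ≤ θ * ‖x - y‖)
    (p : X) (hpC : p ∈ C) (hp : T p = p)
    (α β : ℕ → ℝ) (hα : ∀ n, α n ∈ Set.Icc (0:ℝ) 1) (hβ : ∀ n, β n ∈ Set.Icc (0:ℝ) 1)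
    (x z y : ℕ → X) (hx0 : x 0 ∈ C)
    (hz : ∀ n, z n = (1 - β n) • x n + β n • T (x n))
    (hy : ∀ n, y n = T ((1 - α n) • T (x n) + α n • T (z n)))
    (hx : ∀ n, x (n + 1) = T (y n)) :
    ∀ n, ‖x (n + 1) - p‖ ≤ ‖x 0 - p‖ * θ ^ (3 * (n + 1)) *
      Real.exp (-(1 - θ) * ∑ k ∈ Finset.range (n + 1), α k * β k) :=
  stmt_4_general C hCcv T hTC θ hθ hT p hpC hp α β hα hβ x z y hx0 hz hy hx
end

section
/- Let C be a nonempty compact convex subset of a uniformly convex Banach space and T : C → C satisfy condition (C). Then the K iteration (xₙ) with αₙ, βₙ ∈ [a,b], 0 < a ≤ b < 1, converges strongly to a fixed point of T. -/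
/-!
Suzuki's condition (C) makes `T` quasi-nonexpansive around each fixed point and gives
`‖x - T y‖ ≤ 3 ‖x - T x‖ + ‖x - y‖`, so on a compact set a subsequence of any approximate
fixed point sequence converges to a fixed point. Approximate fixed points exist: for the
Krasnoselskii iterates `u (n + 1) = (u n + T (u n)) / 2` and `d n = ‖u n - T (u n)‖`, the
Goebel–Kirk inequality `2 ^ n (d (i + n) - d i) + (1 + n / 2) d i ≤ ‖T (u (i + n)) - u i‖`
forces `d n → 0` on a bounded set. Hence `T` has a fixed point `p`.

Along the K iteration `‖x n - p‖` is nonincreasing, and since `α n ≥ a` also `‖z n - p‖`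
tends to its limit. As `z n - p` is a convex combination of `x n - p` and `T (x n) - p`, Schu's
lemma (a consequence of uniform convexity) gives `‖x n - T (x n)‖ → 0`. A subsequence of
`x` thus converges to a fixed point `q`, and as `‖x n - q‖` is nonincreasing as well, so does
the whole sequence.
-/

open Filter Set Function Topology

section Convexity

variable {E : Type*} [NormedAddCommGroup E] [NormedSpace ℝ E]

lemma norm_sub_smul_add_smul_sub_le (u v q : E) {t : ℝ} (ht : t ∈ Icc (0 : ℝ) 1) :
    ‖(1 - t) • u + t • v - q‖ ≤ (1 - t) * ‖u - q‖ + t * ‖v - q‖ := by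
  have hsplit : (1 - t) • u + t • v - q = (1 - t) • (u - q) + t • (v - q) := by module
  rw [hsplit]
  refine (norm_add_le _ _).trans_eq ?_
  rw [norm_smul, norm_smul, Real.norm_of_nonneg (sub_nonneg.2 ht.2), Real.norm_of_nonneg ht.1]

lemma norm_sub_smul_add_smul_le_of_norm_add_le {u v : E} {r δ t : ℝ} (hu : ‖u‖ ≤ r) (hv : ‖v‖ ≤ r)
    (huv : ‖u + v‖ ≤ (2 - δ) * r) (ht : t ∈ Icc (0 : ℝ) 1) :
    ‖(1 - t) • u + t • v‖ ≤ (1 - min t (1 - t) * δ) * r := by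
  wlog hhalf : t ≤ 1 / 2 generalizing u v t
  · have h := this hv hu (by rwa [add_comm]) ⟨sub_nonneg.2 ht.2, by linarith [ht.1]⟩
      (by linarith)
    rwa [sub_sub_cancel, min_comm, add_comm] at h
  have hsplit : (1 - t) • u + t • v = (1 - 2 * t) • u + t • (u + v) := by module
  rw [min_eq_left (by linarith), hsplit]
  calc ‖(1 - 2 * t) • u + t • (u + v)‖ ≤ (1 - 2 * t) * ‖u‖ + t * ‖u + v‖ := by
        refine (norm_add_le _ _).trans_eq ?_
        rw [norm_smul, norm_smul, Real.norm_of_nonneg (by linarith),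
          Real.norm_of_nonneg ht.1]
    _ ≤ (1 - 2 * t) * r + t * ((2 - δ) * r) := by
        gcongr
        · linarith
        · exact ht.1
    _ = (1 - t * δ) * r := by ring

lemma norm_sub_half_smul_add_half_smul (x y : E) :
    ‖x - ((1 / 2 : ℝ) • x + (1 / 2 : ℝ) • y)‖ = 1 / 2 * ‖x - y‖ := by
  rw [show x - ((1 / 2 : ℝ) • x + (1 / 2 : ℝ) • y) = (1 / 2 : ℝ) • (x - y) by module, norm_smul]
  norm_num

lemma norm_half_smul_add_half_smul_sub (x y : E) :
    ‖(1 / 2 : ℝ) • x + (1 / 2 : ℝ) • y - y‖ = 1 / 2 * ‖x - y‖ := by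
  rw [show (1 / 2 : ℝ) • x + (1 / 2 : ℝ) • y - y = (1 / 2 : ℝ) • (x - y) by module, norm_smul]
  norm_num

variable [UniformConvexSpace E]

lemma exists_forall_norm_add_le_two_sub_mul {ε : ℝ} (hε : 0 < ε) :
    ∃ δ > 0, ∀ ⦃r : ℝ⦄ ⦃u v : E⦄, ‖u‖ ≤ r → ‖v‖ ≤ r → ε * r ≤ ‖u - v‖ →
      ‖u + v‖ ≤ (2 - δ) * r := by
  obtain ⟨δ, hδ, huc⟩ := exists_forall_closed_ball_dist_add_le_two_sub E hε
  refine ⟨δ, hδ, fun r u v hu hv huv => ?_⟩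
  rcases ((norm_nonneg u).trans hu).eq_or_lt with rfl | hr
  · simp_all
  have hscale : ∀ w : E, ‖r⁻¹ • w‖ = r⁻¹ * ‖w‖ := fun w => by
    rw [norm_smul, Real.norm_of_nonneg (inv_nonneg.2 hr.le)]
  have h := huc (x := r⁻¹ • u) (y := r⁻¹ • v)
    (by rw [hscale, inv_mul_le_one₀ hr]; exact hu) (by rw [hscale, inv_mul_le_one₀ hr]; exact hv)
    (by rw [← smul_sub, hscale, le_inv_mul_iff₀ hr, mul_comm]; exact huv)
  rwa [← smul_add, hscale, inv_mul_le_iff₀ hr, mul_comm] at h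

lemma tendsto_norm_sub_of_tendsto_norm_sub_smul_add_smul {ι : Type*} {l : Filter ι}
    {u v : ι → E} {t : ι → ℝ} {a b r : ℝ} (ha : 0 < a) (hb : b < 1) (ht : ∀ i, t i ∈ Icc a b)
    (hvu : ∀ i, ‖v i‖ ≤ ‖u i‖) (hu : Tendsto (fun i => ‖u i‖) l (𝓝 r))
    (htuv : Tendsto (fun i => ‖(1 - t i) • u i + t i • v i‖) l (𝓝 r)) :
    Tendsto (fun i => ‖u i - v i‖) l (𝓝 0) := by
  refine tendsto_order.2 ⟨fun c hc => .of_forall fun i => hc.trans_le (norm_nonneg _),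
    fun ε hε => ?_⟩
  by_contra hfreq
  simp only [not_eventually, not_lt] at hfreq
  have hr : ε / 2 ≤ r := ge_of_tendsto_of_frequently hu <| hfreq.mono fun i hi => by
    linarith [norm_sub_le (u i) (v i), hvu i]
  have hr1 : 0 < r + 1 := by linarith
  obtain ⟨δ, hδ, huc⟩ := exists_forall_norm_add_le_two_sub_mul (E := E) (div_pos hε hr1)
  set η := min a (1 - b)
  have hη : 0 < η := lt_min ha (sub_pos.2 hb)
  have hcontract : ∃ᶠ i in l,
      ‖(1 - t i) • u i + t i • v i‖ - (1 - η * δ) * ‖u i‖ ≤ 0 := by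
    refine (hfreq.and_eventually (hu.eventually_lt_const (lt_add_one r))).mono ?_
    rintro i ⟨hεi, hri⟩
    have hsep : ε / (r + 1) * ‖u i‖ ≤ ‖u i - v i‖ := by
      calc ε / (r + 1) * ‖u i‖ ≤ ε / (r + 1) * (r + 1) :=
            mul_le_mul_of_nonneg_left hri.le (div_pos hε hr1).le
        _ = ε := div_mul_cancel₀ _ hr1.ne'
        _ ≤ ‖u i - v i‖ := hεi
    have hti : t i ∈ Icc (0 : ℝ) 1 := ⟨ha.le.trans (ht i).1, (ht i).2.trans hb.le⟩
    have hηt : η ≤ min (t i) (1 - t i) := min_le_min (ht i).1 (by linarith [(ht i).2])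
    have h := norm_sub_smul_add_smul_le_of_norm_add_le le_rfl (hvu i) (huc le_rfl (hvu i) hsep) hti
    have : (1 - min (t i) (1 - t i) * δ) * ‖u i‖ ≤ (1 - η * δ) * ‖u i‖ := by gcongr
    linarith
  have hlim := le_of_tendsto_of_frequently (htuv.sub (hu.const_mul (1 - η * δ))) hcontract
  have : 0 < η * δ * r := mul_pos (mul_pos hη hδ) (by linarith)
  linarith

end Convexity

lemma tendsto_of_antitone_norm_sub_of_subseq {E : Type*} [SeminormedAddCommGroup E]
    {x : ℕ → E} {p : E} {φ : ℕ → ℕ} (hx : Antitone fun n => ‖x n - p‖) (hφ : StrictMono φ)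
    (hxφ : Tendsto (x ∘ φ) atTop (𝓝 p)) : Tendsto x atTop (𝓝 p) := by
  rw [tendsto_iff_norm_sub_tendsto_zero] at hxφ ⊢
  exact (tendsto_iff_tendsto_subseq_of_antitone hx hφ.tendsto_atTop).2 hxφ

lemma tendsto_zero_of_two_pow_mul_sub_add_le {d : ℕ → ℝ} (hd : Antitone d) (hd0 : ∀ n, 0 ≤ d n)
    {M : ℝ} (h : ∀ i n : ℕ, 2 ^ n * (d (i + n) - d i) + (1 + n / 2) * d i ≤ M) :
    Tendsto d atTop (𝓝 0) := by
  obtain ⟨L, hL⟩ : ∃ L, Tendsto d atTop (𝓝 L) :=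
    ⟨_, tendsto_atTop_ciInf hd ⟨0, by rintro _ ⟨n, rfl⟩; exact hd0 n⟩⟩
  have hL0 : 0 ≤ L := ge_of_tendsto' hL hd0
  have hbound : ∀ n : ℕ, (1 + n / 2) * L ≤ M := fun n => by
    have hlim := (((hL.comp (tendsto_add_atTop_nat n)).sub hL).const_mul (2 ^ n)).add
      (hL.const_mul (1 + (n : ℝ) / 2))
    simp only [sub_self, mul_zero, zero_add] at hlim
    exact le_of_tendsto' hlim (h · n)
  suffices L = 0 from this ▸ hL
  by_contra hne
  obtain ⟨n, hn⟩ := exists_nat_gt (2 * M / L)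
  have hpos : 0 < L := lt_of_le_of_ne hL0 (Ne.symm hne)
  rw [div_lt_iff₀ hpos] at hn
  nlinarith [hbound n]

def ConditionC {E : Type*} [NormedAddCommGroup E] (T : E → E) (C : Set E) : Prop :=
  ∀ x ∈ C, ∀ y ∈ C, (1 / 2) * ‖x - T x‖ ≤ ‖x - y‖ → ‖T x - T y‖ ≤ ‖x - y‖

namespace ConditionC

variable {E : Type*} [NormedAddCommGroup E] {T : E → E} {C : Set E}

lemma norm_apply_sub_le (hT : ConditionC T C) {q w : E} (hq : q ∈ C) (hTq : IsFixedPt T q)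
    (hw : w ∈ C) : ‖T w - q‖ ≤ ‖w - q‖ := by
  have h := hT q hq w hw (by simp [hTq.eq])
  rwa [hTq.eq, norm_sub_rev, norm_sub_rev q] at h

lemma norm_sub_apply_le (hT : ConditionC T C) (hTC : MapsTo T C C) {x y : E} (hx : x ∈ C)
    (hy : y ∈ C) : ‖x - T y‖ ≤ 3 * ‖x - T x‖ + ‖x - y‖ := by
  by_cases hxy : (1 / 2) * ‖x - T x‖ ≤ ‖x - y‖
  · linarith [hT x hx y hy hxy, norm_sub_le_norm_sub_add_norm_sub x (T x) (T y),
      norm_nonneg (x - T x)]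
  -- otherwise `y` is close to `x`, and condition (C) applies at `T x` instead
  rw [not_le] at hxy
  have hTTx : ‖T x - T (T x)‖ ≤ ‖x - T x‖ :=
    hT x hx (T x) (hTC hx) (by linarith [norm_nonneg (x - T x)])
  have hTx : (1 / 2) * ‖T x - T (T x)‖ ≤ ‖T x - y‖ := by
    linarith [norm_sub_le_norm_sub_add_norm_sub x y (T x), norm_sub_rev y (T x)]
  linarith [hT (T x) (hTC hx) y hy hTx, norm_sub_le_norm_sub_add_norm_sub x (T x) (T y),
    norm_sub_le_norm_sub_add_norm_sub (T x) (T (T x)) (T y),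
    norm_sub_le_norm_sub_add_norm_sub (T x) x y, norm_sub_rev (T x) x]

lemma isFixedPt_of_tendsto (hT : ConditionC T C) (hTC : MapsTo T C C) {ι : Type*}
    {l : Filter ι} [l.NeBot] {u : ι → E} {p : E} (hu : ∀ i, u i ∈ C) (hp : p ∈ C)
    (hup : Tendsto u l (𝓝 p)) (hreg : Tendsto (fun i => ‖u i - T (u i)‖) l (𝓝 0)) :
    IsFixedPt T p := by
  have hup' : Tendsto u l (𝓝 (T p)) := by
    rw [tendsto_iff_norm_sub_tendsto_zero] at hup ⊢
    have hbound := (hreg.const_mul 3).add hup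
    rw [mul_zero, zero_add] at hbound
    exact squeeze_zero (fun _ => norm_nonneg _) (fun i => hT.norm_sub_apply_le hTC (hu i) hp)
      hbound
  exact tendsto_nhds_unique hup' hup

lemma exists_isFixedPt_tendsto_subseq (hT : ConditionC T C) (hTC : MapsTo T C C)
    (hC : IsCompact C) {u : ℕ → E} (hu : ∀ n, u n ∈ C)
    (hreg : Tendsto (fun n => ‖u n - T (u n)‖) atTop (𝓝 0)) :
    ∃ p ∈ C, IsFixedPt T p ∧ ∃ φ : ℕ → ℕ, StrictMono φ ∧ Tendsto (u ∘ φ) atTop (𝓝 p) := by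
  obtain ⟨p, hp, φ, hφ, hup⟩ := hC.tendsto_subseq hu
  exact ⟨p, hp, hT.isFixedPt_of_tendsto hTC (fun n => hu (φ n)) hp hup
    (hreg.comp hφ.tendsto_atTop), φ, hφ, hup⟩

section Krasnoselskii

variable [NormedSpace ℝ E] {u : ℕ → E}

lemma norm_apply_succ_sub_apply_le (hT : ConditionC T C) (hu : ∀ n, u n ∈ C)
    (hstep : ∀ n, u (n + 1) = (1 / 2 : ℝ) • u n + (1 / 2 : ℝ) • T (u n)) (n : ℕ) :
    ‖T (u (n + 1)) - T (u n)‖ ≤ 1 / 2 * ‖u n - T (u n)‖ := by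
  have hdist : ‖u n - u (n + 1)‖ = 1 / 2 * ‖u n - T (u n)‖ := by
    rw [hstep, norm_sub_half_smul_add_half_smul]
  rw [norm_sub_rev, ← hdist]
  exact hT _ (hu n) _ (hu (n + 1)) hdist.ge

lemma antitone_norm_sub_apply (hT : ConditionC T C) (hu : ∀ n, u n ∈ C)
    (hstep : ∀ n, u (n + 1) = (1 / 2 : ℝ) • u n + (1 / 2 : ℝ) • T (u n)) :
    Antitone fun n => ‖u n - T (u n)‖ := by
  refine antitone_nat_of_succ_le fun n => ?_
  have hmid : ‖u (n + 1) - T (u n)‖ = 1 / 2 * ‖u n - T (u n)‖ := by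
    rw [hstep, norm_half_smul_add_half_smul_sub]
  linarith [norm_sub_le_norm_sub_add_norm_sub (u (n + 1)) (T (u n)) (T (u (n + 1))),
    norm_sub_rev (T (u n)) (T (u (n + 1))), norm_apply_succ_sub_apply_le hT hu hstep n]

lemma norm_apply_add_sub_apply_le (hT : ConditionC T C) (hu : ∀ n, u n ∈ C)
    (hstep : ∀ n, u (n + 1) = (1 / 2 : ℝ) • u n + (1 / 2 : ℝ) • T (u n)) (i n : ℕ) :
    ‖T (u (i + n)) - T (u i)‖ ≤ n / 2 * ‖u i - T (u i)‖ := by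
  induction n with
  | zero => simp
  | succ n ih =>
    have hd : ‖u (i + n) - T (u (i + n))‖ ≤ ‖u i - T (u i)‖ :=
      antitone_norm_sub_apply hT hu hstep (Nat.le_add_right i n)
    calc ‖T (u (i + (n + 1))) - T (u i)‖
        ≤ ‖T (u (i + n + 1)) - T (u (i + n))‖ + ‖T (u (i + n)) - T (u i)‖ :=
          norm_sub_le_norm_sub_add_norm_sub _ _ _
      _ ≤ 1 / 2 * ‖u (i + n) - T (u (i + n))‖ + n / 2 * ‖u i - T (u i)‖ :=
          add_le_add (norm_apply_succ_sub_apply_le hT hu hstep _) ih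
      _ ≤ (n + 1 : ℕ) / 2 * ‖u i - T (u i)‖ := by push_cast; linarith

lemma two_pow_mul_sub_add_le (hT : ConditionC T C) (hu : ∀ n, u n ∈ C)
    (hstep : ∀ n, u (n + 1) = (1 / 2 : ℝ) • u n + (1 / 2 : ℝ) • T (u n)) (i n : ℕ) :
    2 ^ n * (‖u (i + n) - T (u (i + n))‖ - ‖u i - T (u i)‖) + (1 + n / 2) * ‖u i - T (u i)‖
      ≤ ‖T (u (i + n)) - u i‖ := by
  induction n generalizing i with
  | zero => simp [norm_sub_rev]
  | succ n ih =>
    have hw : ‖T (u (i + (n + 1))) - u (i + 1)‖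
        ≤ 1 / 2 * ‖T (u (i + (n + 1))) - u i‖ + 1 / 2 * ‖T (u (i + (n + 1))) - T (u i)‖ := by
      have hsplit : T (u (i + (n + 1))) - u (i + 1)
          = (1 / 2 : ℝ) • (T (u (i + (n + 1))) - u i)
            + (1 / 2 : ℝ) • (T (u (i + (n + 1))) - T (u i)) := by
        rw [hstep]; module
      rw [hsplit]
      refine (norm_add_le _ _).trans_eq ?_
      rw [norm_smul, norm_smul]; norm_num
    have hih := ih (i + 1)
    rw [show i + 1 + n = i + (n + 1) by omega] at hih
    have hchain := norm_apply_add_sub_apply_le hT hu hstep i (n + 1)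
    have hd1 : ‖u (i + 1) - T (u (i + 1))‖ ≤ ‖u i - T (u i)‖ :=
      antitone_norm_sub_apply hT hu hstep (Nat.le_succ i)
    have hpow : (n : ℝ) + 1 ≤ 2 ^ n := by exact_mod_cast Nat.lt_two_pow_self
    have hgap : 0 ≤ (2 * 2 ^ n - (n + 2)) * (‖u i - T (u i)‖ - ‖u (i + 1) - T (u (i + 1))‖) :=
      mul_nonneg (by linarith) (by linarith)
    push_cast at hchain ⊢
    rw [pow_succ]
    linarith

lemma tendsto_norm_sub_apply_of_isBounded (hT : ConditionC T C) (hTC : MapsTo T C C)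
    (hC : Bornology.IsBounded C) (hu : ∀ n, u n ∈ C)
    (hstep : ∀ n, u (n + 1) = (1 / 2 : ℝ) • u n + (1 / 2 : ℝ) • T (u n)) :
    Tendsto (fun n => ‖u n - T (u n)‖) atTop (𝓝 0) := by
  obtain ⟨M, hM⟩ := Metric.isBounded_iff.1 hC
  refine tendsto_zero_of_two_pow_mul_sub_add_le (antitone_norm_sub_apply hT hu hstep)
    (fun n => norm_nonneg _) (M := M) fun i n => ?_
  refine (two_pow_mul_sub_add_le hT hu hstep i n).trans ?_
  rw [← dist_eq_norm]
  exact hM (hTC (hu _)) (hu i)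

lemma exists_isFixedPt (hT : ConditionC T C) (hTC : MapsTo T C C) (hne : C.Nonempty)
    (hC : IsCompact C) (hconv : Convex ℝ C) : ∃ p ∈ C, IsFixedPt T p := by
  obtain ⟨x₀, hx₀⟩ := hne
  set u : ℕ → E := fun n => (fun w => (1 / 2 : ℝ) • w + (1 / 2 : ℝ) • T w)^[n] x₀
  have hstep : ∀ n, u (n + 1) = (1 / 2 : ℝ) • u n + (1 / 2 : ℝ) • T (u n) := fun n =>
    iterate_succ_apply' _ n x₀
  have hu : ∀ n, u n ∈ C := fun n => by
    induction n with
    | zero => exact hx₀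
    | succ n ih => rw [hstep]; exact hconv ih (hTC ih) (by norm_num) (by norm_num) (by norm_num)
  obtain ⟨p, hp, hTp, -⟩ := hT.exists_isFixedPt_tendsto_subseq hTC hC hu
    (hT.tendsto_norm_sub_apply_of_isBounded hTC hC.isBounded hu hstep)
  exact ⟨p, hp, hTp⟩

end Krasnoselskii

end ConditionC

section KIteration

variable {E : Type*} [NormedAddCommGroup E] [NormedSpace ℝ E]

structure IsKIteration (T : E → E) (α β : ℕ → ℝ) (x z y : ℕ → E) : Prop where
  z_eq : ∀ n, z n = (1 - β n) • x n + β n • T (x n)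
  y_eq : ∀ n, y n = T ((1 - α n) • T (x n) + α n • T (z n))
  x_succ : ∀ n, x (n + 1) = T (y n)

namespace IsKIteration

variable {T : E → E} {C : Set E} {α β : ℕ → ℝ} {x z y : ℕ → E}

lemma mem (hK : IsKIteration T α β x z y) (hconv : Convex ℝ C) (hTC : MapsTo T C C)
    (hα : ∀ n, α n ∈ Icc (0 : ℝ) 1) (hβ : ∀ n, β n ∈ Icc (0 : ℝ) 1) (hx₀ : x 0 ∈ C) (n : ℕ) :
    x n ∈ C ∧ z n ∈ C ∧ (1 - α n) • T (x n) + α n • T (z n) ∈ C := by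
  have hstep : ∀ n, x n ∈ C → z n ∈ C ∧ (1 - α n) • T (x n) + α n • T (z n) ∈ C := by
    intro n hxn
    have hzn : z n ∈ C := hK.z_eq n ▸
      hconv hxn (hTC hxn) (sub_nonneg.2 (hβ n).2) (hβ n).1 (sub_add_cancel 1 _)
    exact ⟨hzn, hconv (hTC hxn) (hTC hzn) (sub_nonneg.2 (hα n).2) (hα n).1 (sub_add_cancel 1 _)⟩
  have hx : ∀ n, x n ∈ C := fun n => by
    induction n with
    | zero => exact hx₀
    | succ n ih => rw [hK.x_succ, hK.y_eq]; exact hTC (hTC (hstep n ih).2)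
  exact ⟨hx n, hstep n (hx n)⟩

lemma norm_z_sub_le (hK : IsKIteration T α β x z y) {n : ℕ} {q : E} (hβ : β n ∈ Icc (0 : ℝ) 1)
    (hq : ‖T (x n) - q‖ ≤ ‖x n - q‖) : ‖z n - q‖ ≤ ‖x n - q‖ := by
  rw [hK.z_eq]
  refine (norm_sub_smul_add_smul_sub_le _ _ q hβ).trans ?_
  nlinarith [hβ.1]

lemma norm_x_succ_sub_le (hK : IsKIteration T α β x z y) (hTC : MapsTo T C C) {n : ℕ} {q : E}
    (hq : ∀ w ∈ C, ‖T w - q‖ ≤ ‖w - q‖) (hα : α n ∈ Icc (0 : ℝ) 1) (hx : x n ∈ C)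
    (hz : z n ∈ C) (hw : (1 - α n) • T (x n) + α n • T (z n) ∈ C) :
    ‖x (n + 1) - q‖ ≤ (1 - α n) * ‖x n - q‖ + α n * ‖z n - q‖ :=
  calc ‖x (n + 1) - q‖ = ‖T (T ((1 - α n) • T (x n) + α n • T (z n))) - q‖ := by
        rw [hK.x_succ, hK.y_eq]
    _ ≤ ‖T ((1 - α n) • T (x n) + α n • T (z n)) - q‖ := hq _ (hTC hw)
    _ ≤ ‖(1 - α n) • T (x n) + α n • T (z n) - q‖ := hq _ hw
    _ ≤ (1 - α n) * ‖T (x n) - q‖ + α n * ‖T (z n) - q‖ :=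
        norm_sub_smul_add_smul_sub_le _ _ q hα
    _ ≤ (1 - α n) * ‖x n - q‖ + α n * ‖z n - q‖ := by
        gcongr
        · exact sub_nonneg.2 hα.2
        · exact hq _ hx
        · exact hα.1
        · exact hq _ hz

lemma antitone_norm_sub (hK : IsKIteration T α β x z y) (hconv : Convex ℝ C)
    (hTC : MapsTo T C C) (hα : ∀ n, α n ∈ Icc (0 : ℝ) 1) (hβ : ∀ n, β n ∈ Icc (0 : ℝ) 1)
    (hx₀ : x 0 ∈ C) {q : E} (hq : ∀ w ∈ C, ‖T w - q‖ ≤ ‖w - q‖) :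
    Antitone fun n => ‖x n - q‖ := by
  refine antitone_nat_of_succ_le fun n => ?_
  obtain ⟨hx, hz, hw⟩ := hK.mem hconv hTC hα hβ hx₀ n
  have hzx := hK.norm_z_sub_le (hβ n) (hq _ hx)
  have hsucc := hK.norm_x_succ_sub_le hTC hq (hα n) hx hz hw
  nlinarith [(hα n).1]

lemma tendsto_norm_sub_apply [UniformConvexSpace E] (hK : IsKIteration T α β x z y)
    (hconv : Convex ℝ C) (hTC : MapsTo T C C) {p : E} (hp : ∀ w ∈ C, ‖T w - p‖ ≤ ‖w - p‖)
    {a b : ℝ} (ha : 0 < a) (hb : b < 1) (hα : ∀ n, α n ∈ Icc a b) (hβ : ∀ n, β n ∈ Icc a b)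
    (hx₀ : x 0 ∈ C) : Tendsto (fun n => ‖x n - T (x n)‖) atTop (𝓝 0) := by
  have hα₀₁ : ∀ n, α n ∈ Icc (0 : ℝ) 1 := fun n => Icc_subset_Icc ha.le hb.le (hα n)
  have hβ₀₁ : ∀ n, β n ∈ Icc (0 : ℝ) 1 := fun n => Icc_subset_Icc ha.le hb.le (hβ n)
  have hmem := hK.mem hconv hTC hα₀₁ hβ₀₁ hx₀
  obtain ⟨r, hr⟩ : ∃ r, Tendsto (fun n => ‖x n - p‖) atTop (𝓝 r) :=
    ⟨_, tendsto_atTop_ciInf (hK.antitone_norm_sub hconv hTC hα₀₁ hβ₀₁ hx₀ hp)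
      ⟨0, by rintro _ ⟨n, rfl⟩; exact norm_nonneg _⟩⟩
  -- `α n ≥ a` forces `‖z n - p‖` to follow the decrease of `‖x n - p‖`
  have hzr : Tendsto (fun n => ‖z n - p‖) atTop (𝓝 r) := by
    have hlower : Tendsto (fun n => ‖x n - p‖ + (‖x (n + 1) - p‖ - ‖x n - p‖) / a) atTop
        (𝓝 (r + (r - r) / a)) :=
      hr.add (((hr.comp (tendsto_add_atTop_nat 1)).sub hr).div_const a)
    rw [sub_self, zero_div, add_zero] at hlower
    refine tendsto_of_tendsto_of_tendsto_of_le_of_le hlower hr (fun n => ?_)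
      (fun n => hK.norm_z_sub_le (hβ₀₁ n) (hp _ (hmem n).1))
    have hzx := hK.norm_z_sub_le (hβ₀₁ n) (hp _ (hmem n).1)
    have hsucc := hK.norm_x_succ_sub_le hTC hp (hα₀₁ n) (hmem n).1 (hmem n).2.1 (hmem n).2.2
    have hstep : (‖x (n + 1) - p‖ - ‖x n - p‖) / a ≤ ‖z n - p‖ - ‖x n - p‖ := by
      rw [div_le_iff₀ ha]
      nlinarith [(hα n).1]
    dsimp only
    linarith
  have hcombo : ∀ n, (1 - β n) • (x n - p) + β n • (T (x n) - p) = z n - p := fun n => by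
    rw [hK.z_eq]; module
  have h := tendsto_norm_sub_of_tendsto_norm_sub_smul_add_smul ha hb hβ
    (fun n => hp _ (hmem n).1) hr (by simpa only [hcombo] using hzr)
  simpa only [sub_sub_sub_cancel_right] using h

end IsKIteration

end KIteration

theorem stmt_14_general {X : Type*} [NormedAddCommGroup X] [NormedSpace ℝ X]
    [UniformConvexSpace X]
    (C : Set X) (hCcp : IsCompact C) (hCcv : Convex ℝ C)
    (T : X → X) (hTC : ∀ x ∈ C, T x ∈ C)
    (hC : ∀ x ∈ C, ∀ y ∈ C, (1 / 2) * ‖x - T x‖ ≤ ‖x - y‖ → ‖T x - T y‖ ≤ ‖x - y‖)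
    (a b : ℝ) (ha : 0 < a) (hb : b < 1)
    (α β : ℕ → ℝ) (hα : ∀ n, α n ∈ Set.Icc a b) (hβ : ∀ n, β n ∈ Set.Icc a b)
    (x z y : ℕ → X) (hx0 : x 0 ∈ C)
    (hz : ∀ n, z n = (1 - β n) • x n + β n • T (x n))
    (hy : ∀ n, y n = T ((1 - α n) • T (x n) + α n • T (z n)))
    (hx : ∀ n, x (n + 1) = T (y n)) :
    ∃ p ∈ C, T p = p ∧ Tendsto x atTop (nhds p) := by
  have hT : ConditionC T C := hC
  have hTC : MapsTo T C C := fun w hw => hTC w hw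
  have hK : IsKIteration T α β x z y := ⟨hz, hy, hx⟩
  have hα₀₁ : ∀ n, α n ∈ Icc (0 : ℝ) 1 := fun n => Icc_subset_Icc ha.le hb.le (hα n)
  have hβ₀₁ : ∀ n, β n ∈ Icc (0 : ℝ) 1 := fun n => Icc_subset_Icc ha.le hb.le (hβ n)
  obtain ⟨p, hpC, hp⟩ := hT.exists_isFixedPt hTC ⟨x 0, hx0⟩ hCcp hCcv
  have hreg := hK.tendsto_norm_sub_apply hCcv hTC (fun w => hT.norm_apply_sub_le hpC hp)
    ha hb hα hβ hx0
  obtain ⟨q, hqC, hq, φ, hφ, hxφ⟩ := hT.exists_isFixedPt_tendsto_subseq hTC hCcp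
    (fun n => (hK.mem hCcv hTC hα₀₁ hβ₀₁ hx0 n).1) hreg
  have hfejer := hK.antitone_norm_sub hCcv hTC hα₀₁ hβ₀₁ hx0
    (fun w => hT.norm_apply_sub_le hqC hq)
  exact ⟨q, hqC, hq, tendsto_of_antitone_norm_sub_of_subseq hfejer hφ hxφ⟩

theorem stmt_14 {X : Type*} [NormedAddCommGroup X] [NormedSpace ℝ X]
    [UniformConvexSpace X] [CompleteSpace X]
    (C : Set X) (hCne : C.Nonempty) (hCcp : IsCompact C) (hCcv : Convex ℝ C)
    (T : X → X) (hTC : ∀ x ∈ C, T x ∈ C)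
    (hC : ∀ x ∈ C, ∀ y ∈ C, (1 / 2) * ‖x - T x‖ ≤ ‖x - y‖ → ‖T x - T y‖ ≤ ‖x - y‖)
    (a b : ℝ) (ha : 0 < a) (hab : a ≤ b) (hb : b < 1)
    (α β : ℕ → ℝ) (hα : ∀ n, α n ∈ Set.Icc a b) (hβ : ∀ n, β n ∈ Set.Icc a b)
    (x z y : ℕ → X) (hx0 : x 0 ∈ C)
    (hz : ∀ n, z n = (1 - β n) • x n + β n • T (x n))
    (hy : ∀ n, y n = T ((1 - α n) • T (x n) + α n • T (z n)))
    (hx : ∀ n, x (n + 1) = T (y n)) :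
    ∃ p ∈ C, T p = p ∧ Tendsto x atTop (nhds p) :=
  stmt_14_general C hCcp hCcv T hTC hC a b ha hb α β hα hβ x z y hx0 hz hy hx
end
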